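/- Smoothness of the Nash Social Welfare objective: for any allocation matrix π ∈ [0,1]^{M×A} with ∑_a π_{j,a} ≤ 1 for each j, any reward matrices μ, ν ∈ [0,1]^{M×A}, any subset S ⊆ [A], and any realized rewards R ∈ [0,1]^{M×A}, we have |NSW(S,R,μ,π) − NSW(S,R,ν,π)| ≤ ∑_{j=1}^M ∑_{a=1}^A π_{j,a} |μ_{j,a} − ν_{j,a}|, where NSW(S,R,μ,π) = ∏_{j=1}^M ( ∑_{a∈S} π_{j,a} R_{j,a} + ∑_{a∉S} π_{j,a} μ_{j,a} ). -/
import Mathlib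

lemma abs_prod_sub_prod_le {ι : Type*} (s : Finset ι) (f g : ι → ℝ)
    (hf0 : ∀ i ∈ s, 0 ≤ f i) (hf1 : ∀ i ∈ s, f i ≤ 1)
    (hg0 : ∀ i ∈ s, 0 ≤ g i) (hg1 : ∀ i ∈ s, g i ≤ 1) :
    |∏ i ∈ s, f i - ∏ i ∈ s, g i| ≤ ∑ i ∈ s, |f i - g i| := by
  induction s using Finset.cons_induction with
  | empty => simp
  | cons i s hi ih =>
    rw [Finset.prod_cons, Finset.prod_cons, Finset.sum_cons]
    have hfs0 : 0 ≤ ∏ j ∈ s, f j := Finset.prod_nonneg fun j hj => hf0 j (Finset.mem_cons_of_mem hj)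
    have hfs1 : ∏ j ∈ s, f j ≤ 1 := Finset.prod_le_one (fun j hj => hf0 j (Finset.mem_cons_of_mem hj)) (fun j hj => hf1 j (Finset.mem_cons_of_mem hj))
    have key : f i * ∏ j ∈ s, f j - g i * ∏ j ∈ s, g j
        = (f i - g i) * ∏ j ∈ s, f j + g i * (∏ j ∈ s, f j - ∏ j ∈ s, g j) := by ring
    rw [key]
    calc |(f i - g i) * ∏ j ∈ s, f j + g i * (∏ j ∈ s, f j - ∏ j ∈ s, g j)|
        ≤ |(f i - g i) * ∏ j ∈ s, f j| + |g i * (∏ j ∈ s, f j - ∏ j ∈ s, g j)| := abs_add_le _ _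
      _ ≤ |f i - g i| + ∑ j ∈ s, |f j - g j| := by
          rw [abs_mul, abs_mul]
          gcongr
          · rw [abs_of_nonneg hfs0]
            nlinarith [abs_nonneg (f i - g i)]
          · rw [abs_of_nonneg (hg0 i (Finset.mem_cons_self i s))]
            nlinarith [hg1 i (Finset.mem_cons_self i s), abs_nonneg (∏ j ∈ s, f j - ∏ j ∈ s, g j), ih (fun j hj => hf0 j (Finset.mem_cons_of_mem hj)) (fun j hj => hf1 j (Finset.mem_cons_of_mem hj)) (fun j hj => hg0 j (Finset.mem_cons_of_mem hj)) (fun j hj => hg1 j (Finset.mem_cons_of_mem hj))]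

theorem nsw_smooth (M A : ℕ)
    (π : Fin M → Fin A → ℝ)
    (hπ0 : ∀ j a, 0 ≤ π j a) (hπ1 : ∀ j a, π j a ≤ 1)
    (hπrow : ∀ j, ∑ a, π j a ≤ 1)
    (μ ν R : Fin M → Fin A → ℝ)
    (hμ : ∀ j a, μ j a ∈ Set.Icc (0:ℝ) 1)
    (hν : ∀ j a, ν j a ∈ Set.Icc (0:ℝ) 1)
    (hR : ∀ j a, R j a ∈ Set.Icc (0:ℝ) 1)
    (S : Finset (Fin A)) :
    |(∏ j, (∑ a ∈ S, π j a * R j a + ∑ a ∈ Sᶜ, π j a * μ j a)) -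
      (∏ j, (∑ a ∈ S, π j a * R j a + ∑ a ∈ Sᶜ, π j a * ν j a))| ≤
      ∑ j, ∑ a, π j a * |μ j a - ν j a| := by
  have bound : ∀ (w : Fin M → Fin A → ℝ), (∀ j a, w j a ∈ Set.Icc (0:ℝ) 1) → ∀ j,
      (∑ a ∈ S, π j a * R j a + ∑ a ∈ Sᶜ, π j a * w j a) ∈ Set.Icc (0:ℝ) 1 := by
    intro w hw j
    constructor
    · apply add_nonneg <;> apply Finset.sum_nonneg <;> intro a _ <;>
        exact mul_nonneg (hπ0 j a) (by first | exact (hR j a).1 | exact (hw j a).1)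
    · calc ∑ a ∈ S, π j a * R j a + ∑ a ∈ Sᶜ, π j a * w j a
          ≤ ∑ a ∈ S, π j a + ∑ a ∈ Sᶜ, π j a := by
            gcongr with a _ a _
            · exact mul_le_of_le_one_right (hπ0 j a) (hR j a).2
            · exact mul_le_of_le_one_right (hπ0 j a) (hw j a).2
        _ = ∑ a, π j a := by rw [Finset.sum_add_sum_compl]
        _ ≤ 1 := hπrow j
  calc |(∏ j, (∑ a ∈ S, π j a * R j a + ∑ a ∈ Sᶜ, π j a * μ j a)) -
      (∏ j, (∑ a ∈ S, π j a * R j a + ∑ a ∈ Sᶜ, π j a * ν j a))|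
      ≤ ∑ j, |(∑ a ∈ S, π j a * R j a + ∑ a ∈ Sᶜ, π j a * μ j a) -
          (∑ a ∈ S, π j a * R j a + ∑ a ∈ Sᶜ, π j a * ν j a)| := by
        apply abs_prod_sub_prod_le
        · exact fun j _ => (bound μ hμ j).1
        · exact fun j _ => (bound μ hμ j).2
        · exact fun j _ => (bound ν hν j).1
        · exact fun j _ => (bound ν hν j).2
    _ ≤ ∑ j, ∑ a, π j a * |μ j a - ν j a| := by
        apply Finset.sum_le_sum
        intro j _
        have : (∑ a ∈ S, π j a * R j a + ∑ a ∈ Sᶜ, π j a * μ j a) -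
            (∑ a ∈ S, π j a * R j a + ∑ a ∈ Sᶜ, π j a * ν j a)
            = ∑ a ∈ Sᶜ, π j a * (μ j a - ν j a) := by
          rw [add_sub_add_left_eq_sub, ← Finset.sum_sub_distrib]
          exact Finset.sum_congr rfl fun a _ => (mul_sub _ _ _).symm
        rw [this]
        calc |∑ a ∈ Sᶜ, π j a * (μ j a - ν j a)| ≤ ∑ a ∈ Sᶜ, |π j a * (μ j a - ν j a)| :=
              Finset.abs_sum_le_sum_abs _ _
          _ = ∑ a ∈ Sᶜ, π j a * |μ j a - ν j a| := by
              refine Finset.sum_congr rfl fun a _ => ?_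
              rw [abs_mul, abs_of_nonneg (hπ0 j a)]
          _ ≤ ∑ a, π j a * |μ j a - ν j a| :=
              Finset.sum_le_sum_of_subset_of_nonneg (Finset.subset_univ _)
                (fun a _ _ => mul_nonneg (hπ0 j a) (abs_nonneg _))
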